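/- For every integer n ≥ 1, QEC(K_1+P_{2n}) = −4 sin²(π/(2(2n+1))). -/

import Mathlib

/-!
Vertex `0` of `K₁ + P_m` is adjacent to all other vertices, so `D = 2(J - I) - A`. For `f ⟂ 1`
with `|f| = 1`, writing `x` for the restriction of `f` to the path (so `∑ x = -f 0`), this gives
`⟨f, Df⟩ = -2 + 2 f₀² - 2 ∑ x_k x_{k+1}`, and the claim `QEC = 2c - 2`, `c = cos (π / (m + 1))`,
becomes `(1 - c) (∑ x)² ≤ Q x` (with equality attained), where `Q` is the form of `A_P / 2 + c I`
on the path `P_m`.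

`Q` is positive semidefinite: with `w_k = sin (k π / (m + 1))` it is a positive combination of
the squares `(w_{k+2} x_k + w_{k+1} x_{k+1})²`, and its kernel is spanned by `(-1)^k w_k`, which
for even `m` is orthogonal to `1` and gives the value `2c - 2`. For even `m` the equation
`(A_P / 2 + c I) y = 1` also has an explicit solution, with `∑ y = (m + 1) / (1 + c)`, so
Cauchy–Schwarz for `Q` gives `(∑ x)² ≤ Q x · (m + 1) / (1 + c)`; finally `(1 - c)(m + 1) ≤ 1 + c`
is elementary.
-/

open Real

/-- The fan graph `K₁ + Pₘ` on vertex set `{0, 1, …, m}`: vertex `0` is joined to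
every other vertex, and `1, 2, …, m` form a path. -/
def fanGraph (m : ℕ) : SimpleGraph (Fin (m + 1)) where
  Adj i j := i ≠ j ∧ (i = 0 ∨ j = 0 ∨ (i : ℕ) + 1 = (j : ℕ) ∨ (j : ℕ) + 1 = (i : ℕ))
  symm := ⟨by
    intro i j ⟨h1, h2⟩
    exact ⟨h1.symm, by tauto⟩⟩
  loopless := ⟨by intro i ⟨h1, _⟩; exact h1 rfl⟩

/-- The set of values `⟨f, Df⟩` where `D` is the distance matrix of the fan graph
`K₁ + Pₘ` and `f` ranges over unit vectors orthogonal to the all-ones vector;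
its maximum is the quadratic embedding constant `QEC(K₁ + Pₘ)`. -/
def qecSet (m : ℕ) : Set ℝ :=
  {r : ℝ | ∃ f : Fin (m + 1) → ℝ, (∑ i, f i ^ 2) = 1 ∧ (∑ i, f i) = 0 ∧
    r = ∑ i, ∑ j, ((fanGraph m).dist i j : ℝ) * f i * f j}

open Finset

namespace SimpleGraph

variable {V : Type*} {G : SimpleGraph V}

theorem dist_eq_two_of_forall_adj {c : V} (hc : ∀ v ≠ c, G.Adj c v) {u w : V} (huw : u ≠ w)
    (h : ¬G.Adj u w) : G.dist u w = 2 := by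
  have huc : u ≠ c := by rintro rfl; exact h (hc w huw.symm)
  have hwc : w ≠ c := by rintro rfl; exact h (hc u huw).symm
  let p : G.Walk u w := .cons (hc u huc).symm (.cons (hc w hwc) .nil)
  have hle : G.dist u w ≤ 2 := dist_le p
  have hpos : 0 < G.dist u w := Reachable.pos_dist_of_ne ⟨p⟩ huw
  have hne : G.dist u w ≠ 1 := fun h1 => h (dist_eq_one_iff_adj.mp h1)
  omega

theorem sum_dist_mul_mul_of_forall_adj [Fintype V] [DecidableEq V] [DecidableRel G.Adj] {c : V}
    (hc : ∀ v ≠ c, G.Adj c v) (f : V → ℝ) :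
    ∑ u, ∑ w, (G.dist u w : ℝ) * f u * f w =
      2 * (∑ u, f u) ^ 2 - 2 * ∑ u, f u ^ 2 - ∑ u, ∑ w, if G.Adj u w then f u * f w else 0 := by
  have hdist : ∀ u w, (G.dist u w : ℝ) =
      2 - (if u = w then 2 else 0) - (if G.Adj u w then 1 else 0) := by
    intro u w
    by_cases huw : u = w
    · simp [huw]
    by_cases h : G.Adj u w
    · norm_num [huw, h, dist_eq_one_iff_adj.mpr h]
    · simp [huw, h, dist_eq_two_of_forall_adj hc huw h]
  simp only [hdist, sub_mul, ite_mul, zero_mul, one_mul, sum_sub_distrib, sum_ite_eq, mem_univ,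
    if_true, mul_assoc, ← mul_sum, ← sum_mul, sq]

end SimpleGraph

theorem Fin.sum_univ_succ_eq_add_sum_range {M : Type*} [AddCommMonoid M] {n : ℕ}
    (g : Fin (n + 1) → M) (x : ℕ → M) (hx : ∀ i : Fin n, g i.succ = x i) :
    ∑ i, g i = g 0 + ∑ k ∈ range n, x k := by
  simp only [Fin.sum_univ_succ, hx, Fin.sum_univ_eq_sum_range x]

theorem sum_range_sum_range_ite_adjacent (N : ℕ) (x : ℕ → ℝ) :
    ∑ a ∈ range (N + 1), ∑ b ∈ range (N + 1),
        (if a + 1 = b ∨ b + 1 = a then x a * x b else 0) =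
      2 * ∑ k ∈ range N, x k * x (k + 1) := by
  have hsplit : ∀ a b, (if a + 1 = b ∨ b + 1 = a then x a * x b else 0) =
      (if a + 1 = b then x a * x b else 0) + (if b + 1 = a then x b * x a else 0) := by
    intro a b
    split_ifs <;> first | ring1 | (exfalso; omega)
  have hrow : ∀ a, ∑ b ∈ range (N + 1), (if a + 1 = b then x a * x b else 0) =
      if a < N then x a * x (a + 1) else 0 := by
    intro a
    simp [sum_ite_eq, mem_range]
  simp only [hsplit, sum_add_distrib]
  rw [sum_comm (f := fun a b => if b + 1 = a then x b * x a else 0)]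
  simp only [hrow, sum_range_succ, lt_irrefl, if_false, add_zero]
  rw [sum_congr rfl fun k hk => if_pos (mem_range.mp hk)]
  ring

instance (m : ℕ) : DecidableRel (fanGraph m).Adj := fun _ _ =>
  inferInstanceAs (Decidable (_ ∧ _))

theorem fanGraph_adj_zero {m : ℕ} {v : Fin (m + 1)} (hv : v ≠ 0) : (fanGraph m).Adj 0 v :=
  ⟨hv.symm, Or.inl rfl⟩

theorem fanGraph_adj_succ_succ {m : ℕ} {i j : Fin m} :
    (fanGraph m).Adj i.succ j.succ ↔ (i : ℕ) + 1 = j ∨ (j : ℕ) + 1 = i := by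
  simp only [fanGraph, ne_eq, Fin.succ_inj, Fin.succ_ne_zero, Fin.val_succ, false_or]
  omega

theorem fanGraph_sum_sum_ite_adj (N : ℕ) (f : Fin (N + 2) → ℝ) (x : ℕ → ℝ)
    (hx : ∀ i : Fin (N + 1), f i.succ = x i) :
    ∑ u, ∑ w, (if (fanGraph (N + 1)).Adj u w then f u * f w else 0) =
      2 * f 0 * ∑ k ∈ range (N + 1), x k + 2 * ∑ k ∈ range N, x k * x (k + 1) := by
  simp only [Fin.sum_univ_succ (n := N + 1), SimpleGraph.irrefl, if_false, zero_add,
    fanGraph_adj_zero (Fin.succ_ne_zero _), (fanGraph_adj_zero (Fin.succ_ne_zero _)).symm,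
    if_true, fanGraph_adj_succ_succ, hx, sum_add_distrib]
  rw [Fin.sum_univ_eq_sum_range (fun k => f 0 * x k),
    Fin.sum_univ_eq_sum_range (fun k => x k * f 0),
    Fin.sum_univ_eq_sum_range (fun a => ∑ j : Fin (N + 1),
      if a + 1 = j ∨ (j : ℕ) + 1 = a then x a * x j else 0)]
  simp only [fun a => Fin.sum_univ_eq_sum_range
    (fun b => if a + 1 = b ∨ b + 1 = a then x a * x b else 0)]
  rw [sum_range_sum_range_ite_adjacent, ← mul_sum, ← sum_mul]
  ring

theorem fanGraph_sum_dist_mul_mul (N : ℕ) (f : Fin (N + 2) → ℝ) (x : ℕ → ℝ)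
    (hx : ∀ i : Fin (N + 1), f i.succ = x i) :
    ∑ i, ∑ j, ((fanGraph (N + 1)).dist i j : ℝ) * f i * f j =
      2 * (∑ i, f i) ^ 2 - 2 * ∑ i, f i ^ 2 - 2 * f 0 * ∑ k ∈ range (N + 1), x k
        - 2 * ∑ k ∈ range N, x k * x (k + 1) := by
  rw [SimpleGraph.sum_dist_mul_mul_of_forall_adj (fun _ => fanGraph_adj_zero),
    fanGraph_sum_sum_ite_adj N f x hx]
  ring

/-- The bilinear form `⟨x, (A / 2 + c I) z⟩` on `ℝ^{N+1}`, where `A` is the adjacency matrix of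
the path `0 — 1 — ⋯ — N`. -/
noncomputable def pathForm (N : ℕ) (c : ℝ) (x z : ℕ → ℝ) : ℝ :=
  ∑ k ∈ range N, (x k * z (k + 1) + x (k + 1) * z k) / 2 + c * ∑ k ∈ range (N + 1), x k * z k

section pathForm

variable {N : ℕ} {c : ℝ}

theorem pathForm_self (x : ℕ → ℝ) :
    pathForm N c x x = ∑ k ∈ range N, x k * x (k + 1) + c * ∑ k ∈ range (N + 1), x k ^ 2 := by
  simp only [pathForm, sq]
  congr 1
  exact sum_congr rfl fun k _ => by ring

theorem pathForm_const_mul_right (a : ℝ) (x z : ℕ → ℝ) :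
    pathForm N c x (fun k => a * z k) = a * pathForm N c x z := by
  simp only [pathForm, mul_add, mul_sum]
  congr 1
  · exact sum_congr rfl fun k _ => by ring
  · exact sum_congr rfl fun k _ => by ring

theorem pathForm_const_one_left (z : ℕ → ℝ) :
    pathForm N c (fun _ => 1) z = (1 + c) * ∑ k ∈ range (N + 1), z k - (z 0 + z N) / 2 := by
  have hsucc := sum_range_succ' z N
  have hlast := sum_range_succ z N
  simp only [pathForm, one_mul, ← sum_div, sum_add_distrib]
  linarith

theorem pathForm_succ_right {Y : ℕ → ℝ} (h0 : Y 0 = 0) (hN : Y (N + 2) = 0) (x : ℕ → ℝ) :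
    pathForm N c x (fun k => Y (k + 1)) =
      ∑ k ∈ range (N + 1), x k * ((Y k + Y (k + 2)) / 2 + c * Y (k + 1)) := by
  have hlow := sum_range_succ' (fun k => x k * Y k) N
  have hhigh := sum_range_succ (fun k => x k * Y (k + 2)) N
  simp only [h0, hN, mul_zero, add_zero] at hlow hhigh
  simp only [pathForm, mul_add, sum_add_distrib, add_div, ← sum_div, mul_div_assoc', ← mul_sum,
    mul_left_comm _ c, add_assoc, Nat.reduceAdd]
  linear_combination -(hlow + hhigh) / 2

-- The diagonal terms telescope: by the recurrence, the two weights of `x k * z k` add up to `c`.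
theorem pathForm_eq_sum_div {w : ℕ → ℝ} (hw0 : w 0 = 0) (hwN : w (N + 2) = 0)
    (hw : ∀ k ≤ N, w (k + 1) ≠ 0) (hrec : ∀ k ≤ N, w k + w (k + 2) = 2 * c * w (k + 1))
    (x z : ℕ → ℝ) :
    pathForm N c x z = ∑ k ∈ range N,
      (w (k + 2) * x k + w (k + 1) * x (k + 1)) * (w (k + 2) * z k + w (k + 1) * z (k + 1)) /
        (2 * w (k + 1) * w (k + 2)) := by
  set α : ℕ → ℝ := fun k => w (k + 2) / (2 * w (k + 1)) * (x k * z k)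
  set β : ℕ → ℝ := fun k => w k / (2 * w (k + 1)) * (x k * z k)
  have hterm : ∀ k ∈ range N,
      (w (k + 2) * x k + w (k + 1) * x (k + 1)) * (w (k + 2) * z k + w (k + 1) * z (k + 1)) /
        (2 * w (k + 1) * w (k + 2)) =
          α k + (x k * z (k + 1) + x (k + 1) * z k) / 2 + β (k + 1) := by
    intro k hk
    have hk := mem_range.mp hk
    have h1 := hw k hk.le
    have h2 := hw (k + 1) hk
    simp only [α, β]
    field_simp
    ring
  have hα : ∑ k ∈ range N, α k = ∑ k ∈ range (N + 1), α k := by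
    simp [sum_range_succ, α, hwN]
  have hβ : ∑ k ∈ range N, β (k + 1) = ∑ k ∈ range (N + 1), β k := by
    simp [sum_range_succ', β, hw0]
  have hαβ : ∀ k ∈ range (N + 1), α k + β k = c * (x k * z k) := by
    intro k hk
    have hk := Nat.lt_succ_iff.mp (mem_range.mp hk)
    have h1 := hw k hk
    simp only [α, β]
    field_simp
    linear_combination (x k * z k) * hrec k hk
  rw [sum_congr rfl hterm, sum_add_distrib, sum_add_distrib, hα, hβ, pathForm, mul_sum,
    ← sum_congr rfl hαβ, sum_add_distrib]
  ring

theorem sq_pathForm_le {w : ℕ → ℝ} (hw0 : w 0 = 0) (hwN : w (N + 2) = 0)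
    (hw : ∀ k ≤ N, 0 < w (k + 1)) (hrec : ∀ k ≤ N, w k + w (k + 2) = 2 * c * w (k + 1))
    (x z : ℕ → ℝ) :
    pathForm N c x z ^ 2 ≤ pathForm N c x x * pathForm N c z z := by
  simp only [pathForm_eq_sum_div hw0 hwN (fun k hk => (hw k hk).ne') hrec]
  have hd : ∀ k ∈ range N, 0 ≤ 2 * w (k + 1) * w (k + 2) := fun k hk => by
    have hk := mem_range.mp hk
    have := hw k hk.le
    have := hw (k + 1) hk
    positivity
  refine sum_sq_le_sum_mul_sum_of_sq_le_mul _ (fun k hk => div_nonneg (mul_self_nonneg _) (hd k hk))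
    (fun k hk => div_nonneg (mul_self_nonneg _) (hd k hk)) fun k _ => le_of_eq ?_
  rw [div_mul_div_comm, div_pow]
  ring

end pathForm

theorem sin_nat_mul_recurrence (θ : ℝ) (k : ℕ) :
    sin (k * θ) + sin ((k + 2 : ℕ) * θ) = 2 * cos θ * sin ((k + 1 : ℕ) * θ) := by
  push_cast
  rw [sin_add_sin]
  ring_nf
  rw [cos_neg]

theorem cos_nat_mul_recurrence (θ : ℝ) (k : ℕ) :
    cos (k * θ) + cos ((k + 2 : ℕ) * θ) = 2 * cos θ * cos ((k + 1 : ℕ) * θ) := by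
  push_cast
  rw [cos_add_cos]
  ring_nf
  rw [cos_neg]

theorem neg_one_pow_mul_recurrence {g : ℕ → ℝ} {c : ℝ} (k : ℕ)
    (hg : g k + g (k + 2) = 2 * c * g (k + 1)) :
    ((-1) ^ k * g k + (-1) ^ (k + 2) * g (k + 2)) / 2 + c * ((-1) ^ (k + 1) * g (k + 1)) = 0 := by
  linear_combination (-1) ^ k / 2 * hg

-- Equality holds for `K = 3`; for `K ≥ 4` the bound `1 - t² / 2 ≤ cos t` is enough.
theorem one_sub_cos_pi_div_mul_le {K : ℕ} (hK : 3 ≤ K) :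
    (1 - cos (π / K)) * K ≤ 1 + cos (π / K) := by
  rcases hK.eq_or_lt with rfl | hK4
  · norm_num [cos_pi_div_three]
  have hK4 : (4 : ℝ) ≤ K := by exact_mod_cast hK4
  have hcos : 1 - (π / K) ^ 2 / 2 ≤ cos (π / K) := one_sub_sq_div_two_le_cos
  have hπ : π ^ 2 < 10 := by nlinarith [pi_lt_d2, pi_pos]
  have hπK : π ^ 2 * (K + 1) ≤ 4 * K ^ 2 := by nlinarith
  calc (1 - cos (π / K)) * K ≤ (π / K) ^ 2 / 2 * K := by gcongr; linarith
    _ ≤ 2 - (π / K) ^ 2 / 2 := by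
      rw [div_pow, ← sub_nonneg]
      field_simp
      nlinarith
    _ ≤ 1 + cos (π / K) := by linarith

section cosPiDiv

variable {N : ℕ}

theorem add_two_mul_pi_div_add_two : ((N : ℝ) + 2) * (π / (N + 2)) = π := by
  field_simp

theorem add_one_mul_pi_div_add_two : ((N : ℝ) + 1) * (π / (N + 2)) = π - π / (N + 2) := by
  field_simp
  ring

theorem cos_pi_div_add_two_nonneg : 0 ≤ cos (π / (N + 2)) := by
  apply cos_nonneg_of_neg_pi_div_two_le_of_le
  · linarith [pi_pos, show 0 ≤ π / (N + 2) by positivity]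
  · exact div_le_div_of_nonneg_left pi_pos.le two_pos (by linarith [N.cast_nonneg (α := ℝ)])

theorem sq_pathForm_cos_pi_div_le (x z : ℕ → ℝ) :
    pathForm N (cos (π / (N + 2))) x z ^ 2 ≤
      pathForm N (cos (π / (N + 2))) x x * pathForm N (cos (π / (N + 2))) z z := by
  set θ := π / (N + 2)
  refine sq_pathForm_le (w := fun k => sin (k * θ)) (by simp) ?_ (fun k hk => ?_)
    (fun k _ => sin_nat_mul_recurrence θ k) x z
  · push_cast
    rw [add_two_mul_pi_div_add_two, sin_pi]
  · apply sin_pos_of_pos_of_lt_pi (by positivity)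
    rw [← add_two_mul_pi_div_add_two (N := N)]
    have : (k : ℝ) ≤ N := by exact_mod_cast hk
    push_cast
    exact mul_lt_mul_of_pos_right (by linarith) (by positivity)

theorem exists_pathForm_eq_sum (hN : Odd N) :
    ∃ z : ℕ → ℝ, (∀ x, pathForm N (cos (π / (N + 2))) x z = ∑ k ∈ range (N + 1), x k) ∧
      ∑ k ∈ range (N + 1), z k = (N + 2) / (1 + cos (π / (N + 2))) := by
  set θ := π / (N + 2)
  set c := cos θ
  have hc : 0 < 1 + c := by linarith [cos_pi_div_add_two_nonneg (N := N)]
  set y : ℕ → ℝ := fun k => (1 - (-1) ^ k * cos (k * θ)) / (1 + c)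
  have hy0 : y 0 = 0 := by simp [y]
  have hyN : y (N + 2) = 0 := by
    simp only [y, (hN.add_even even_two).neg_one_pow]
    push_cast
    rw [add_two_mul_pi_div_add_two, cos_pi]
    ring
  have hy1 : y 1 = 1 := by simp [y, c, hc.ne']
  have hyN1 : y (N + 1) = 1 := by
    simp only [y, hN.add_one.neg_one_pow]
    push_cast
    rw [add_one_mul_pi_div_add_two, cos_pi_sub]
    field_simp
    ring
  have hrec : ∀ k, (y k + y (k + 2)) / 2 + c * y (k + 1) = 1 := by
    intro k
    have := neg_one_pow_mul_recurrence (g := fun k => cos (k * θ)) k (cos_nat_mul_recurrence θ k)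
    have key : ∀ a : ℕ → ℝ, (a k + a (k + 2)) / 2 + c * a (k + 1) = 0 →
        ((1 - a k) / (1 + c) + (1 - a (k + 2)) / (1 + c)) / 2 +
          c * ((1 - a (k + 1)) / (1 + c)) = 1 :=
      fun a ha => by field_simp; linear_combination -2 * ha
    exact key (fun k => (-1) ^ k * cos (k * θ)) this
  have hz : ∀ x, pathForm N c x (fun k => y (k + 1)) = ∑ k ∈ range (N + 1), x k := by
    intro x
    simp [pathForm_succ_right hy0 hyN, hrec]
  refine ⟨fun k => y (k + 1), hz, ?_⟩
  have := pathForm_const_one_left (N := N) (c := c) (fun k => y (k + 1))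
  rw [hz, hy1, hyN1] at this
  simp only [sum_const, card_range, nsmul_eq_mul, mul_one, add_self_div_two] at this
  push_cast at this
  field_simp
  linarith

theorem exists_pathForm_eq_zero (hN : Odd N) :
    ∃ v : ℕ → ℝ, v 0 ≠ 0 ∧ ∑ k ∈ range (N + 1), v k = 0 ∧
      ∀ x, pathForm N (cos (π / (N + 2))) x v = 0 := by
  set θ := π / (N + 2)
  set c := cos θ
  have hc : 0 < 1 + c := by linarith [cos_pi_div_add_two_nonneg (N := N)]
  have hθ : 0 < sin θ := sin_pos_of_pos_of_lt_pi (by positivity) <| by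
    rw [← add_two_mul_pi_div_add_two (N := N)]
    exact lt_mul_of_one_lt_left (by positivity) (by linarith [N.cast_nonneg (α := ℝ)])
  set u : ℕ → ℝ := fun k => (-1) ^ k * sin (k * θ)
  have hu0 : u 0 = 0 := by simp [u]
  have huN : u (N + 2) = 0 := by
    simp only [u]
    push_cast
    rw [add_two_mul_pi_div_add_two, sin_pi, mul_zero]
  have hrec : ∀ k, (u k + u (k + 2)) / 2 + c * u (k + 1) = 0 := fun k =>
    neg_one_pow_mul_recurrence (g := fun k => sin (k * θ)) k (sin_nat_mul_recurrence θ k)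
  have hv : ∀ x, pathForm N c x (fun k => u (k + 1)) = 0 := fun x => by
    simp [pathForm_succ_right hu0 huN, hrec]
  refine ⟨fun k => u (k + 1), by simpa [u] using hθ.ne', ?_, hv⟩
  have := pathForm_const_one_left (N := N) (c := c) (fun k => u (k + 1))
  have hu1 : u 1 = -sin θ := by simp [u]
  have huN1 : u (N + 1) = sin θ := by
    simp only [u, hN.add_one.neg_one_pow]
    push_cast
    rw [add_one_mul_pi_div_add_two, sin_pi_sub, one_mul]
  rw [hv, hu1, huN1] at this
  have hsum : (1 + c) * ∑ k ∈ range (N + 1), u (k + 1) = 0 := by linarith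
  exact (mul_eq_zero.mp hsum).resolve_left hc.ne'

theorem exists_pathForm_self_eq_zero (hN : Odd N) :
    ∃ x : ℕ → ℝ, ∑ k ∈ range (N + 1), x k = 0 ∧ ∑ k ∈ range (N + 1), x k ^ 2 = 1 ∧
      pathForm N (cos (π / (N + 2))) x x = 0 := by
  obtain ⟨v, hv0, hsum, hv⟩ := exists_pathForm_eq_zero hN
  have hS : 0 < ∑ k ∈ range (N + 1), v k ^ 2 :=
    (sq_pos_of_ne_zero hv0).trans_le (single_le_sum (fun k _ => sq_nonneg (v k))
      (mem_range.mpr N.succ_pos))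
  set r := √(∑ k ∈ range (N + 1), v k ^ 2)
  refine ⟨fun k => r⁻¹ * v k, ?_, ?_, ?_⟩
  · rw [← mul_sum, hsum, mul_zero]
  · simp only [mul_pow, ← mul_sum, inv_pow, r, sq_sqrt hS.le, inv_mul_cancel₀ hS.ne']
  · rw [pathForm_const_mul_right, hv, mul_zero]

theorem one_sub_cos_mul_sq_sum_le_pathForm (hN : Odd N) (x : ℕ → ℝ) :
    (1 - cos (π / (N + 2))) * (∑ k ∈ range (N + 1), x k) ^ 2 ≤
      pathForm N (cos (π / (N + 2))) x x := by
  set c := cos (π / (N + 2))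
  obtain ⟨z, hxz, hz⟩ := exists_pathForm_eq_sum hN
  have hc : 0 < 1 + c := by linarith [cos_pi_div_add_two_nonneg (N := N)]
  have hc1 : 0 ≤ 1 - c := by linarith [cos_le_one (π / (N + 2))]
  have hCS := sq_pathForm_cos_pi_div_le (N := N) x z
  rw [hxz, hxz, hz] at hCS
  have hK : (1 - c) * ((N + 2) / (1 + c)) ≤ 1 := by
    have := one_sub_cos_pi_div_mul_le (K := N + 2) (by have := hN.pos; omega)
    push_cast at this
    rw [mul_div_assoc', div_le_one hc]
    linarith
  have hQ : 0 ≤ pathForm N c x x := by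
    by_contra! hneg
    have : 0 < (N + 2) / (1 + c) := by positivity
    nlinarith [sq_nonneg (∑ k ∈ range (N + 1), x k)]
  nlinarith [mul_le_mul_of_nonneg_left hCS hc1, mul_le_mul_of_nonneg_right hK hQ]

theorem two_mul_cos_pi_div_sub_two_mem_qecSet (hN : Odd N) :
    2 * cos (π / (N + 2)) - 2 ∈ qecSet (N + 1) := by
  obtain ⟨x, hsum, hsq, hQ⟩ := exists_pathForm_self_eq_zero hN
  let f : Fin (N + 2) → ℝ := Fin.cons 0 fun i => x i
  have hf : ∀ i : Fin (N + 1), f i.succ = x i := fun i => Fin.cons_succ _ _ _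
  have hs : ∑ i, f i = 0 := by
    rw [Fin.sum_univ_succ_eq_add_sum_range f x hf]
    simp [f, hsum]
  have hs2 : ∑ i, f i ^ 2 = 1 := by
    rw [Fin.sum_univ_succ_eq_add_sum_range _ (fun k => x k ^ 2) fun i => by rw [hf]]
    simp [f, hsq]
  refine ⟨f, hs2, hs, ?_⟩
  rw [fanGraph_sum_dist_mul_mul N f x hf, hs, hs2, hsum]
  rw [pathForm_self, hsq] at hQ
  linarith

theorem two_mul_cos_pi_div_sub_two_mem_upperBounds_qecSet (hN : Odd N) :
    2 * cos (π / (N + 2)) - 2 ∈ upperBounds (qecSet (N + 1)) := by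
  rintro r ⟨f, hf2, hf1, rfl⟩
  let x : ℕ → ℝ := fun k => if h : k < N + 1 then f (Fin.succ ⟨k, h⟩) else 0
  have hx : ∀ i : Fin (N + 1), f i.succ = x i := fun i => by
    simp only [x, dif_pos i.isLt, Fin.eta]
  have hs := Fin.sum_univ_succ_eq_add_sum_range f x hx
  have hs2 := Fin.sum_univ_succ_eq_add_sum_range (fun i => f i ^ 2) (fun k => x k ^ 2)
    fun i => by simp only [hx]
  have := one_sub_cos_mul_sq_sum_le_pathForm hN x
  rw [pathForm_self] at this
  rw [fanGraph_sum_dist_mul_mul N f x hx, hf1, hf2]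
  have h0 : f 0 = -∑ k ∈ range (N + 1), x k := by linarith
  rw [show ∑ k ∈ range (N + 1), x k ^ 2 = 1 - f 0 ^ 2 by linarith, h0] at this
  rw [h0]
  nlinarith

end cosPiDiv

/-- For every `n ≥ 1`, `QEC(K₁ + P₂ₙ) = −4 sin²(π/(2(2n+1)))`. -/
theorem qec_fan_even (n : ℕ) (hn : 1 ≤ n) :
    IsGreatest (qecSet (2 * n)) (-4 * Real.sin (π / (2 * (2 * n + 1))) ^ 2) := by
  obtain ⟨k, rfl⟩ : ∃ k, n = k + 1 := ⟨n - 1, by omega⟩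
  set u := π / (2 * (2 * ((k + 1 : ℕ) : ℝ) + 1))
  have hu : π / (((2 * k + 1 : ℕ) : ℝ) + 2) = 2 * u := by
    simp only [u]
    push_cast
    field_simp
    ring
  have hval : -4 * sin u ^ 2 = 2 * cos (π / ((2 * k + 1 : ℕ) + 2)) - 2 := by
    rw [hu, cos_two_mul']
    linear_combination -2 * sin_sq_add_cos_sq u
  rw [hval, show 2 * (k + 1) = 2 * k + 1 + 1 by ring]
  exact ⟨two_mul_cos_pi_div_sub_two_mem_qecSet (odd_two_mul_add_one k),
    two_mul_cos_pi_div_sub_two_mem_upperBounds_qecSet (odd_two_mul_add_one k)⟩
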